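/- arXiv:2401.14929 — 2 statements merged into one kernel-verified Lean document; each statement's English description precedes it below -/
import Mathlib

section
/- Let G be a compact topological group with Haar probability measure μ, and let V be a real Banach space on which G acts continuously by linear isometries. For n ≥ 1 and a continuous map ρ : Gⁿ → V define the coboundary δρ : Gⁿ⁺¹ → V by δρ(s₀, s₁, …, sₙ) := s₀ • ρ(s₁, …, sₙ) + Σ_{i=1}^{n} (−1)^i ρ(s₀, …, s_{i−1} s_i, …, sₙ) + (−1)^{n+1} ρ(s₀, …, s_{n−1}), and for a continuous β : Gⁿ⁺¹ → V define hβ : Gⁿ → V by (hβ)(t₁, …, tₙ) := (−1)^{n+1} ∫_G β(t₁, …, tₙ, v) dμ(v). Then for every continuous ρ : Gⁿ → V (n ≥ 1) one has δ(hρ) + h(δρ) = ρ, i.e. h is a contracting homotopy for the continuous inhomogeneous cochain complex in positive degrees. -/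
open MeasureTheory

/-- The inhomogeneous coboundary operator on continuous cochains:
`δρ(s₀,…,sₙ) = s₀ • ρ(s₁,…,sₙ) + Σ_{i=1}^{n} (-1)^i ρ(s₀,…,s_{i-1}s_i,…,sₙ)
  + (-1)^{n+1} ρ(s₀,…,s_{n-1})`. -/
def coboundary {G : Type*} [Group G] {V : Type*} [NormedAddCommGroup V] [NormedSpace ℝ V]
    (σ : G →* (V ≃ₗᵢ[ℝ] V)) (n : ℕ) (ρ : (Fin n → G) → V) :
    (Fin (n + 1) → G) → V := fun s =>
  σ (s 0) (ρ fun i => s i.succ)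
    + ∑ i : Fin n, ((-1 : ℝ) ^ (i.val + 1)) •
        ρ (fun j => if j.val < i.val then s j.castSucc
            else if j.val = i.val then s j.castSucc * s j.succ
            else s j.succ)
    + ((-1 : ℝ) ^ (n + 1)) • ρ (fun j => s j.castSucc)

/-- The averaging (contracting-homotopy) operator on cochains:
`(hβ)(t₁,…,tₙ) = (-1)^{n+1} ∫_G β(t₁,…,tₙ,v) dμ(v)` for an `(n+1)`-cochain `β`. -/
noncomputable def avg {G : Type*} [Group G] [TopologicalSpace G] [MeasurableSpace G]
    {V : Type*} [NormedAddCommGroup V] [NormedSpace ℝ V]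
    (μ : Measure G) (n : ℕ) (β : (Fin (n + 1) → G) → V) : (Fin n → G) → V :=
  fun t => ((-1 : ℝ) ^ (n + 1)) • ∫ v : G, β (Fin.snoc t v) ∂μ

/-!
Integrate `δρ(s₀, …, sₘ, v)` over `v`. All terms but the last two are the terms of `δ` applied to
the cochain `t ↦ ∫ ρ(t, v) dμ(v)`; the term `ρ(s₀, …, sₘ₋₁, sₘ v)` integrates to
`∫ ρ(s₀, …, sₘ₋₁, v) dμ(v)` by left invariance of `μ`, which is exactly the last term of that
coboundary; and the final term `± ρ(s)` is constant in `v`. Hence `h(δρ) = ρ - δ(hρ)`.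
-/

theorem Fin.tail_snoc {α : Type*} {n : ℕ} (s : Fin (n + 1) → α) (v : α) :
    Fin.tail (Fin.snoc s v : Fin (n + 2) → α) = Fin.snoc (Fin.tail s) v := by
  funext i
  refine Fin.lastCases ?_ (fun k => ?_) i
  · simp [Fin.tail]
  · simp only [Fin.tail, Fin.succ_castSucc, Fin.snoc_castSucc]

section Coboundary

variable {G : Type*} [Group G] {V : Type*} [NormedAddCommGroup V] [NormedSpace ℝ V]

def mulFace {n : ℕ} (s : Fin (n + 1) → G) (i : Fin n) : Fin n → G := fun j =>
  if j.val < i.val then s j.castSucc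
  else if j.val = i.val then s j.castSucc * s j.succ
  else s j.succ

theorem coboundary_apply (σ : G →* (V ≃ₗᵢ[ℝ] V)) (n : ℕ) (ρ : (Fin n → G) → V)
    (s : Fin (n + 1) → G) :
    coboundary σ n ρ s = σ (s 0) (ρ (Fin.tail s))
      + ∑ i : Fin n, ((-1 : ℝ) ^ (i.val + 1)) • ρ (mulFace s i)
      + ((-1 : ℝ) ^ (n + 1)) • ρ (Fin.init s) :=
  rfl

theorem mulFace_snoc_castSucc {n : ℕ} (s : Fin (n + 1) → G) (v : G) (i : Fin n) :
    mulFace (Fin.snoc s v : Fin (n + 2) → G) i.castSucc = Fin.snoc (mulFace s i) v := by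
  funext j
  refine Fin.lastCases ?_ (fun k => ?_) j
  · have hi := i.isLt
    simp [mulFace, Fin.succ_last, show ¬ n < i.val by omega, show n ≠ i.val by omega]
  · simp only [mulFace, Fin.val_castSucc, Fin.succ_castSucc, Fin.snoc_castSucc]

theorem mulFace_snoc_last {n : ℕ} (s : Fin (n + 1) → G) (v : G) :
    mulFace (Fin.snoc s v : Fin (n + 2) → G) (Fin.last n) =
      Fin.snoc (Fin.init s) (s (Fin.last n) * v) := by
  funext j
  refine Fin.lastCases ?_ (fun k => ?_) j
  · simp [mulFace, Fin.succ_last]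
  · simp [mulFace, Fin.init, k.isLt]

theorem coboundary_smul (σ : G →* (V ≃ₗᵢ[ℝ] V)) (n : ℕ) (c : ℝ) (ρ : (Fin n → G) → V) :
    coboundary σ n (c • ρ) = c • coboundary σ n ρ := by
  funext s
  simp only [coboundary_apply, Pi.smul_apply, map_smul, Finset.smul_sum, smul_add, smul_comm c]

theorem coboundary_succ_snoc (σ : G →* (V ≃ₗᵢ[ℝ] V)) (n : ℕ) (ρ : (Fin (n + 1) → G) → V)
    (s : Fin (n + 1) → G) (v : G) :
    coboundary σ (n + 1) ρ (Fin.snoc s v) =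
      coboundary σ n (fun t => ρ (Fin.snoc t v)) s
        + ((-1 : ℝ) ^ (n + 1)) •
          (ρ (Fin.snoc (Fin.init s) (s (Fin.last n) * v)) - ρ (Fin.snoc (Fin.init s) v))
        + ((-1 : ℝ) ^ (n + 2)) • ρ s := by
  rw [coboundary_apply, coboundary_apply, Fin.sum_univ_castSucc]
  simp only [Fin.snoc_apply_zero, Fin.tail_snoc, mulFace_snoc_castSucc, mulFace_snoc_last,
    Fin.init_snoc, Fin.val_castSucc, Fin.val_last, smul_sub]
  abel

theorem integrable_coboundary {X : Type*} [MeasurableSpace X] (μ : Measure X)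
    (σ : G →* (V ≃ₗᵢ[ℝ] V)) (n : ℕ) (F : X → (Fin n → G) → V)
    (hF : ∀ t, Integrable (fun x => F x t) μ) (s : Fin (n + 1) → G) :
    Integrable (fun x => coboundary σ n (F x) s) μ :=
  ((((σ (s 0)).toContinuousLinearEquiv : V →L[ℝ] V).integrable_comp (hF _)).fun_add
    (integrable_finsetSum _ fun _ _ => (hF _).fun_smul _)).fun_add ((hF _).fun_smul _)

theorem integral_coboundary {X : Type*} [MeasurableSpace X] (μ : Measure X)
    (σ : G →* (V ≃ₗᵢ[ℝ] V)) (n : ℕ) (F : X → (Fin n → G) → V)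
    (hF : ∀ t, Integrable (fun x => F x t) μ) (s : Fin (n + 1) → G) :
    ∫ x, coboundary σ n (F x) s ∂μ = coboundary σ n (fun t => ∫ x, F x t ∂μ) s := by
  have hσF : Integrable (fun x => σ (s 0) (F x (Fin.tail s))) μ :=
    ((σ (s 0)).toContinuousLinearEquiv : V →L[ℝ] V).integrable_comp (hF _)
  have hsum := integrable_finsetSum Finset.univ fun i _ =>
    (hF (mulFace s i)).fun_smul ((-1 : ℝ) ^ (i.val + 1))
  simp only [coboundary_apply]
  rw [integral_add (hσF.fun_add hsum) ((hF _).fun_smul _), integral_add hσF hsum,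
    integral_finsetSum _ fun i _ => (hF _).fun_smul _]
  simp only [integral_smul]
  congr 2
  exact (σ (s 0)).toContinuousLinearEquiv.integral_comp_comm _

theorem integral_coboundary_succ_snoc [CompleteSpace V] [MeasurableSpace G] [MeasurableMul G]
    (μ : Measure G) [μ.IsMulLeftInvariant] [IsProbabilityMeasure μ] (σ : G →* (V ≃ₗᵢ[ℝ] V))
    (n : ℕ) (ρ : (Fin (n + 1) → G) → V) (hρ : ∀ t, Integrable (fun v => ρ (Fin.snoc t v)) μ)
    (s : Fin (n + 1) → G) :
    ∫ v, coboundary σ (n + 1) ρ (Fin.snoc s v) ∂μ =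
      coboundary σ n (fun t => ∫ v, ρ (Fin.snoc t v) ∂μ) s + ((-1 : ℝ) ^ (n + 2)) • ρ s := by
  have hδ := integrable_coboundary μ σ n _ hρ s
  have hρ_shift := (hρ (Fin.init s)).comp_mul_left (s (Fin.last n))
  have hdiff : Integrable (fun v => ((-1 : ℝ) ^ (n + 1)) •
      (ρ (Fin.snoc (Fin.init s) (s (Fin.last n) * v)) - ρ (Fin.snoc (Fin.init s) v))) μ :=
    (hρ_shift.sub (hρ _)).fun_smul _
  simp only [coboundary_succ_snoc]
  rw [integral_add (hδ.fun_add hdiff) (integrable_const _), integral_add hδ hdiff,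
    integral_coboundary μ σ n _ hρ, integral_smul, integral_sub hρ_shift (hρ _),
    integral_mul_left_eq_self (fun v => ρ (Fin.snoc (Fin.init s) v)), sub_self, smul_zero,
    add_zero, integral_const, probReal_univ, one_smul]

end Coboundary

theorem contracting_homotopy_general {G : Type*} [Group G] [TopologicalSpace G] [IsTopologicalGroup G]
    [CompactSpace G] [MeasurableSpace G] [BorelSpace G]
    (μ : Measure G) [μ.IsHaarMeasure] [IsProbabilityMeasure μ]
    {V : Type*} [NormedAddCommGroup V] [NormedSpace ℝ V] [CompleteSpace V]
    (σ : G →* (V ≃ₗᵢ[ℝ] V))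
    (m : ℕ) (ρ : (Fin (m + 1) → G) → V) (hρ : Continuous ρ) :
    coboundary σ m (avg μ m ρ) + avg μ (m + 1) (coboundary σ (m + 1) ρ) = ρ := by
  have hρ_snoc (t : Fin m → G) : Integrable (fun v => ρ (Fin.snoc t v)) μ :=
    (hρ.comp (continuous_const.finSnoc continuous_id)).integrable_of_hasCompactSupport
      (.of_compactSpace _)
  have havg : avg μ m ρ = ((-1 : ℝ) ^ (m + 1)) • fun t => ∫ v, ρ (Fin.snoc t v) ∂μ := rfl
  have hsign : (-1 : ℝ) ^ (m + 1 + 1) = -(-1) ^ (m + 1) := by ring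
  funext s
  rw [Pi.add_apply, havg, coboundary_smul, Pi.smul_apply, avg,
    integral_coboundary_succ_snoc μ σ m ρ hρ_snoc s, hsign, smul_add, smul_smul, neg_mul_neg,
    ← mul_pow, neg_one_mul, neg_neg, one_pow, one_smul, neg_smul, add_neg_cancel_left]

/-- For a compact group `G` with Haar probability measure `μ` acting
continuously by linear isometries on a real Banach space `V`, the averaging operator `h`
is a contracting homotopy for the continuous inhomogeneous cochain complex in positive
degrees: `δ(hρ) + h(δρ) = ρ` for every continuous cochain `ρ : Gⁿ → V` with `n ≥ 1`
(here `n = m + 1`). -/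
theorem contracting_homotopy {G : Type*} [Group G] [TopologicalSpace G] [IsTopologicalGroup G]
    [CompactSpace G] [MeasurableSpace G] [BorelSpace G]
    (μ : Measure G) [μ.IsHaarMeasure] [IsProbabilityMeasure μ]
    {V : Type*} [NormedAddCommGroup V] [NormedSpace ℝ V] [CompleteSpace V]
    (σ : G →* (V ≃ₗᵢ[ℝ] V)) (hσ : Continuous fun p : G × V => σ p.1 p.2)
    (m : ℕ) (ρ : (Fin (m + 1) → G) → V) (hρ : Continuous ρ) :
    coboundary σ m (avg μ m ρ) + avg μ (m + 1) (coboundary σ (m + 1) ρ) = ρ :=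
  contracting_homotopy_general μ σ m ρ hρ
end

section
/- Let G be a compact topological group and A a unital C*-algebra, with unitary group U(A) := {u ∈ A : u*u = uu* = 1}. For every δ > 0 there exists ε > 0 with the following property: for every continuous map ρ : G → U(A) with sup_{s,t ∈ G} ‖ρ(s)ρ(t) − ρ(st)‖ ≤ ε, there exists a continuous group homomorphism ρ' : G → U(A) with sup_{s ∈ G} ‖ρ'(s) − ρ(s)‖ ≤ δ. (No boundedness hypothesis on ρ is needed since unitaries have norm 1.) -/
/-!
Kazhdan's averaging argument. For `f : G → A` with invertible values, the map
`s ↦ ∫ f (s t) f(t)⁻¹ dt` over the Haar probability measure moves `f` by `O(d)` and has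
multiplicativity defect `O(d²)`, where `d` is the defect of `f`. Starting from `ρ`, the iterates
stay within `1/4` of `ρ` (so their values stay invertible with bounded inverses) and converge
uniformly to a continuous homomorphism `g` into `A` close to `ρ`. Averaging `g t g(t)⋆` gives a
self-adjoint `P` near `1` with `g s P g(s)⋆ = P`, and conjugating `g` by the square root of `P`
makes it unitary while moving it only by `O(‖P - 1‖)`.
-/

open MeasureTheory Filter Topology

theorem norm_ringInverse_one_sub_le {R : Type*} [NormedRing R] [HasSummableGeomSeries R]
    [NormOneClass R] {t : R} (ht : ‖t‖ < 1) : ‖Ring.inverse (1 - t)‖ ≤ (1 - ‖t‖)⁻¹ := by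
  simpa [← geom_series_eq_inverse t ht] using tsum_geometric_le_of_norm_lt_one t ht

theorem Unitary.ringInverse_eq_star {R : Type*} [MonoidWithZero R] [StarMul R] {u : R}
    (hu : u ∈ unitary R) : Ring.inverse u = star u :=
  Ring.inverse_unit (Unitary.toUnits ⟨u, hu⟩)

theorem Unitary.isUnit_and_norm_ringInverse_le {A : Type*} [NormedRing A] [StarRing A]
    [CStarRing A] [CompleteSpace A] [Nontrivial A] {u a : A} (hu : u ∈ unitary A)
    (h : ‖a - u‖ < 1) : IsUnit a ∧ ‖Ring.inverse a‖ ≤ (1 - ‖a - u‖)⁻¹ := by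
  set t := star u * (u - a)
  have ht : ‖t‖ = ‖a - u‖ := by
    rw [CStarRing.norm_mem_unitary_mul _ (Unitary.star_mem hu), norm_sub_rev]
  have hat : a = u * (1 - t) := by
    rw [mul_sub, mul_one, ← mul_assoc, Unitary.mul_star_self_of_mem hu, one_mul, sub_sub_cancel]
  have hu' : IsUnit u := (Unitary.toUnits ⟨u, hu⟩).isUnit
  have hinv : Ring.inverse a = Ring.inverse (1 - t) * star u := by
    rw [hat, Ring.inverse_mul (.inl hu'), Unitary.ringInverse_eq_star hu]
  refine ⟨hat ▸ hu'.mul (isUnit_one_sub_of_norm_lt_one (ht ▸ h)), ?_⟩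
  rw [hinv, CStarRing.norm_mul_mem_unitary _ (Unitary.star_mem hu), ← ht]
  exact norm_ringInverse_one_sub_le (ht ▸ h)

theorem Continuous.ringInverse {X R : Type*} [TopologicalSpace X] [NormedRing R]
    [HasSummableGeomSeries R] {f : X → R} (hf : Continuous f) (hunit : ∀ x, IsUnit (f x)) :
    Continuous fun x => Ring.inverse (f x) :=
  continuous_iff_continuousAt.2 fun x =>
    ((hunit x).unit_spec ▸ NormedRing.inverse_continuousAt (hunit x).unit).comp hf.continuousAt

theorem MeasureTheory.integral_star {Y E : Type*} [MeasurableSpace Y] {μ : Measure Y}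
    [NormedAddCommGroup E] [NormedSpace ℝ E] [StarAddMonoid E] [StarModule ℝ E] [ContinuousStar E]
    (f : Y → E) : ∫ y, star (f y) ∂μ = star (∫ y, f y ∂μ) :=
  (starL' ℝ : E ≃L[ℝ] E).integral_comp_comm f

section CompactIntegral

variable {Y E : Type*} [TopologicalSpace Y] [CompactSpace Y] [MeasurableSpace Y]
  [OpensMeasurableSpace Y] [NormedAddCommGroup E] {μ : Measure Y} [IsFiniteMeasure μ]

theorem Continuous.integrable_of_compactSpace {f : Y → E} (hf : Continuous f) : Integrable f μ :=
  hf.integrable_of_hasCompactSupport (.of_compactSpace f)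

variable [NormedSpace ℝ E]

variable (μ) in
theorem continuous_integral_of_continuous_uncurry {X : Type*} [TopologicalSpace X]
    {F : X → Y → E} (hF : Continuous (Function.uncurry F)) :
    Continuous fun x => ∫ y, F x y ∂μ := by
  have hlip : LipschitzWith (μ Set.univ).toNNReal fun g : C(Y, E) => ∫ y, g y ∂μ := by
    refine LipschitzWith.of_dist_le_mul fun g h => ?_
    rw [dist_eq_norm, ← integral_sub g.continuous.integrable_of_compactSpace
      h.continuous.integrable_of_compactSpace, ENNReal.coe_toNNReal_eq_toReal, mul_comm]
    exact norm_integral_le_of_norm_le_const (ae_of_all _ fun y =>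
      ((g - h).norm_coe_le_norm y).trans_eq (dist_eq_norm g h).symm)
  exact hlip.continuous.comp (ContinuousMap.curry ⟨_, hF⟩).continuous

end CompactIntegral

theorem MeasureTheory.norm_integral_le_of_forall_norm_le {Y E : Type*} [MeasurableSpace Y]
    {μ : Measure Y} [IsProbabilityMeasure μ] [NormedAddCommGroup E] [NormedSpace ℝ E]
    {f : Y → E} {C : ℝ} (h : ∀ y, ‖f y‖ ≤ C) : ‖∫ y, f y ∂μ‖ ≤ C := by
  simpa using norm_integral_le_of_norm_le_const (μ := μ) (ae_of_all _ h)

theorem norm_defect_mul_ringInverse_le {G A : Type*} [Mul G] [NormedRing A] {f : G → A} {d M : ℝ}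
    (hd : ∀ s t, ‖f (s * t) - f s * f t‖ ≤ d) (hM : ∀ t, ‖Ring.inverse (f t)‖ ≤ M) (s t : G) :
    ‖(f (s * t) - f s * f t) * Ring.inverse (f t)‖ ≤ d * M :=
  (norm_mul_le _ _).trans <|
    mul_le_mul (hd s t) (hM t) (norm_nonneg _) ((norm_nonneg _).trans (hd s t))

section KazhdanStep

variable {G : Type*} [Group G] [TopologicalSpace G] [IsTopologicalGroup G] [CompactSpace G]
  [MeasurableSpace G] [BorelSpace G] (μ : Measure G) [IsProbabilityMeasure μ]
  {A : Type*} [NormedRing A] [NormedAlgebra ℝ A] [CompleteSpace A]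

/-- Equal to `f s + ∫ (f (s t) - f s f t) f(t)⁻¹ dt`: a Newton step for `f (s t) = f s f t`. -/
noncomputable def kazhdanStep (f : G → A) (s : G) : A :=
  ∫ t, f (s * t) * Ring.inverse (f t) ∂μ

variable {μ} {f : G → A} (hf : Continuous f) (hunit : ∀ t, IsUnit (f t))
include hf hunit

theorem continuous_kazhdanStep : Continuous (kazhdanStep μ f) :=
  continuous_integral_of_continuous_uncurry μ
    ((hf.comp continuous_mul).mul ((hf.ringInverse hunit).comp continuous_snd))

theorem kazhdanStep_sub_eq (s : G) :
    kazhdanStep μ f s - f s = ∫ t, (f (s * t) - f s * f t) * Ring.inverse (f t) ∂μ := by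
  have hfi := hf.ringInverse hunit
  simp_rw [sub_mul, Ring.mul_inverse_cancel_right _ _ (hunit _)]
  rw [integral_sub (by fun_prop : Continuous _).integrable_of_compactSpace (integrable_const _)]
  simp [kazhdanStep]

/-- The second factor has integral zero, which is what allows subtracting the constant `f s`
from the first one; afterwards both factors are of the size of the defect of `f`. -/
theorem kazhdanStep_mul_sub_mul_eq [μ.IsMulLeftInvariant] (s u : G) :
    kazhdanStep μ f (s * u) - kazhdanStep μ f s * kazhdanStep μ f u =
      ∫ t, (f (s * (u * t)) * Ring.inverse (f (u * t)) - f s) *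
        (f (u * t) * Ring.inverse (f t) - kazhdanStep μ f u) ∂μ := by
  have hfi := hf.ringInverse hunit
  have hu : Continuous fun t => u * t := continuous_const_mul u
  set a : G → A := fun t => f (s * (u * t)) * Ring.inverse (f (u * t))
  set b : G → A := fun t => f (u * t) * Ring.inverse (f t)
  have hca : Continuous a := (hf.comp ((continuous_const_mul s).comp hu)).mul (hfi.comp hu)
  have hcb : Continuous b := (hf.comp hu).mul hfi
  have hint : ∀ {g : G → A}, Continuous g → Integrable g μ := (·.integrable_of_compactSpace)
  have ha : ∫ t, a t ∂μ = kazhdanStep μ f s :=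
    integral_mul_left_eq_self (fun t => f (s * t) * Ring.inverse (f t)) u
  have hab : ∫ t, a t * b t ∂μ = kazhdanStep μ f (s * u) := by
    simp only [a, b, kazhdanStep, mul_assoc, Ring.inverse_mul_cancel_left _ _ (hunit _)]
  calc kazhdanStep μ f (s * u) - kazhdanStep μ f s * kazhdanStep μ f u
      = ∫ t, (a t * b t - a t * kazhdanStep μ f u) ∂μ
          - ∫ t, f s * (b t - kazhdanStep μ f u) ∂μ := by
        rw [integral_const_mul_of_integrable (hint ?_), integral_sub (hint ?_) (hint ?_),
          integral_sub (hint ?_) (hint ?_), integral_mul_const_of_integrable (hint hca), ha, hab]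
        · simp [b, kazhdanStep]
        all_goals fun_prop
    _ = _ := by
        rw [← integral_sub (hint ?_) (hint ?_)]
        · congr 1 with t
          simp only [a, b]
          noncomm_ring
        all_goals fun_prop

variable {d M : ℝ} (hd : ∀ s t, ‖f (s * t) - f s * f t‖ ≤ d)
  (hM : ∀ t, ‖Ring.inverse (f t)‖ ≤ M)
include hd hM

theorem norm_kazhdanStep_sub_le (s : G) : ‖kazhdanStep μ f s - f s‖ ≤ d * M := by
  rw [kazhdanStep_sub_eq hf hunit]
  exact norm_integral_le_of_forall_norm_le (norm_defect_mul_ringInverse_le hd hM s)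

theorem norm_kazhdanStep_mul_sub_mul_le [μ.IsMulLeftInvariant] (s u : G) :
    ‖kazhdanStep μ f (s * u) - kazhdanStep μ f s * kazhdanStep μ f u‖ ≤ 2 * (d * M) ^ 2 := by
  rw [kazhdanStep_mul_sub_mul_eq hf hunit]
  refine norm_integral_le_of_forall_norm_le fun t => ?_
  have hdM : 0 ≤ d * M := (norm_nonneg _).trans (norm_defect_mul_ringInverse_le hd hM s t)
  have hleft : ‖f (s * (u * t)) * Ring.inverse (f (u * t)) - f s‖ ≤ d * M := by
    rw [← Ring.mul_inverse_cancel_right _ (f s) (hunit (u * t)), ← sub_mul]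
    exact norm_defect_mul_ringInverse_le hd hM s (u * t)
  have hright : ‖f (u * t) * Ring.inverse (f t) - kazhdanStep μ f u‖ ≤ 2 * (d * M) := by
    have : f (u * t) * Ring.inverse (f t) - kazhdanStep μ f u =
        (f (u * t) - f u * f t) * Ring.inverse (f t) - (kazhdanStep μ f u - f u) := by
      rw [sub_mul, Ring.mul_inverse_cancel_right _ _ (hunit t)]
      abel
    rw [this, two_mul]
    exact (norm_sub_le _ _).trans (add_le_add (norm_defect_mul_ringInverse_le hd hM u t)
      (norm_kazhdanStep_sub_le hf hunit hd hM u))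
  calc _ ≤ _ := norm_mul_le _ _
    _ ≤ (d * M) * (2 * (d * M)) := mul_le_mul hleft hright (norm_nonneg _) hdM
    _ = 2 * (d * M) ^ 2 := by ring

end KazhdanStep

section Iteration

variable {G : Type*} [Group G] [TopologicalSpace G] [IsTopologicalGroup G] [CompactSpace G]
  [MeasurableSpace G] [BorelSpace G] {μ : Measure G} [IsProbabilityMeasure μ]
  [μ.IsMulLeftInvariant]
  {A : Type*} [NormedRing A] [StarRing A] [CStarRing A] [NormedAlgebra ℝ A] [CompleteSpace A]
  [Nontrivial A]

theorem kazhdanStep_spec_of_near_unitary (ρ : G → unitary A) {f : G → A} (hf : Continuous f)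
    (hnear : ∀ s, ‖f s - ρ s‖ ≤ 1 / 4) {d : ℝ} (hd : ∀ s t, ‖f (s * t) - f s * f t‖ ≤ d) :
    Continuous (kazhdanStep μ f) ∧ (∀ s, ‖kazhdanStep μ f s - f s‖ ≤ d * (4 / 3)) ∧
      ∀ s t, ‖kazhdanStep μ f (s * t) - kazhdanStep μ f s * kazhdanStep μ f t‖ ≤
        2 * (d * (4 / 3)) ^ 2 := by
  have hnear' s : ‖f s - ρ s‖ < 1 := (hnear s).trans_lt (by norm_num)
  have hunit s := (Unitary.isUnit_and_norm_ringInverse_le (ρ s).2 (hnear' s)).1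
  have hM s : ‖Ring.inverse (f s)‖ ≤ 4 / 3 := by
    refine (Unitary.isUnit_and_norm_ringInverse_le (ρ s).2 (hnear' s)).2.trans ?_
    rw [inv_le_comm₀ (by linarith [hnear' s]) (by norm_num)]
    linarith [hnear s]
  exact ⟨continuous_kazhdanStep hf hunit, norm_kazhdanStep_sub_le hf hunit hd hM,
    norm_kazhdanStep_mul_sub_mul_le hf hunit hd hM⟩

variable (ρ : G → unitary A) {ε : ℝ} (hε : ε ≤ 1 / 16)
  (hdef : ∀ s t, ‖(ρ (s * t) : A) - ρ s * ρ t‖ ≤ ε)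
include hε hdef

theorem kazhdanStep_iterate_spec (hρ : Continuous ρ) {F : ℕ → G → A}
    (hF0 : F 0 = fun s => (ρ s : A)) (hF : ∀ n, F (n + 1) = kazhdanStep μ (F n)) (n : ℕ) :
    Continuous (F n) ∧ (∀ s, ‖F n s - ρ s‖ ≤ 3 * ε - 3 * ε / 2 ^ n) ∧
      ∀ s t, ‖F n (s * t) - F n s * F n t‖ ≤ ε / 2 ^ n := by
  have hε0 : 0 ≤ ε := (norm_nonneg _).trans (hdef 1 1)
  induction n with
  | zero => simpa [hF0] using ⟨continuous_subtype_val.comp hρ, hdef⟩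
  | succ n ih =>
    obtain ⟨hc, hnear, hd⟩ := ih
    have hpow : ε / 2 ^ (n + 1) = ε / 2 ^ n / 2 := by rw [pow_succ, div_div]
    have hx0 : 0 ≤ ε / 2 ^ n := by positivity
    have hxε : ε / 2 ^ n ≤ ε := div_le_self hε0 (one_le_pow₀ one_le_two)
    obtain ⟨hc', hstep, hd'⟩ := kazhdanStep_spec_of_near_unitary (μ := μ) ρ hc
      (fun s => (hnear s).trans ((sub_le_self _ (by positivity)).trans (by linarith))) hd
    rw [hF n]
    refine ⟨hc', fun s => ?_, fun s t => (hd' s t).trans ?_⟩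
    · calc ‖kazhdanStep μ (F n) s - ρ s‖
          ≤ ‖kazhdanStep μ (F n) s - F n s‖ + ‖F n s - ρ s‖ := norm_sub_le_norm_sub_add_norm_sub ..
        _ ≤ ε / 2 ^ n * (4 / 3) + (3 * ε - 3 * ε / 2 ^ n) := add_le_add (hstep s) (hnear s)
        _ ≤ 3 * ε - 3 * ε / 2 ^ (n + 1) := by rw [mul_div_assoc, mul_div_assoc, hpow]; linarith
    · rw [hpow]
      nlinarith

theorem norm_kazhdanStep_iterate_succ_sub_le (hρ : Continuous ρ) {F : ℕ → G → A}
    (hF0 : F 0 = fun s => (ρ s : A)) (hF : ∀ n, F (n + 1) = kazhdanStep μ (F n)) (n : ℕ)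
    (s : G) : ‖F (n + 1) s - F n s‖ ≤ 3 * ε / 2 / 2 ^ n := by
  have hε0 : 0 ≤ ε := (norm_nonneg _).trans (hdef 1 1)
  obtain ⟨hc, hnear, hd⟩ := kazhdanStep_iterate_spec ρ hε hdef hρ hF0 hF n
  obtain ⟨-, hstep, -⟩ := kazhdanStep_spec_of_near_unitary (μ := μ) ρ hc
    (fun s => (hnear s).trans ((sub_le_self _ (by positivity)).trans (by linarith))) hd
  have hx0 : 0 ≤ ε / 2 ^ n := by positivity
  calc _ ≤ ε / 2 ^ n * (4 / 3) := hF n ▸ hstep s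
    _ ≤ 3 * ε / 2 / 2 ^ n := by rw [div_right_comm, mul_div_assoc]; linarith

variable (μ) in
include μ in
theorem exists_continuous_monoidHom_near (hρ : Continuous ρ) :
    ∃ g : G →* A, Continuous g ∧ ∀ s, ‖g s - ρ s‖ ≤ 3 * ε := by
  set F : ℕ → G → A := fun n => (kazhdanStep μ)^[n] fun s => (ρ s : A)
  have hF n : F (n + 1) = kazhdanStep μ (F n) := Function.iterate_succ_apply' _ _ _
  have hspec := kazhdanStep_iterate_spec ρ hε hdef hρ rfl hF
  let Fc n : C(G, A) := ⟨F n, (hspec n).1⟩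
  have hε0 : 0 ≤ ε := (norm_nonneg _).trans (hdef 1 1)
  have hdist n : dist (Fc n) (Fc (n + 1)) ≤ 3 * ε / 2 / 2 ^ n :=
    (ContinuousMap.dist_le (by positivity)).2 fun s => by
      rw [dist_comm, dist_eq_norm]
      exact norm_kazhdanStep_iterate_succ_sub_le ρ hε hdef hρ rfl hF n s
  obtain ⟨g, hg⟩ := cauchySeq_tendsto_of_complete (cauchySeq_of_le_geometric_two hdist)
  have hpt s : Tendsto (fun n => F n s) atTop (𝓝 (g s)) :=
    ((continuous_eval_const s).tendsto g).comp hg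
  have hnear s : ‖g s - ρ s‖ ≤ 3 * ε := by
    rw [← dist_eq_norm, dist_comm]
    exact (ContinuousMap.dist_apply_le_dist s).trans
      (dist_le_of_le_geometric_two_of_tendsto₀ hdist hg)
  have hmul s t : g (s * t) = g s * g t := by
    have hlim : Tendsto (fun n => ‖F n (s * t) - F n s * F n t‖) atTop
        (𝓝 ‖g (s * t) - g s * g t‖) := ((hpt _).sub ((hpt s).mul (hpt t))).norm
    have hzero : Tendsto (fun n : ℕ => ε / 2 ^ n) atTop (𝓝 0) :=
      tendsto_const_nhds.div_atTop (tendsto_pow_atTop_atTop_of_one_lt one_lt_two)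
    exact sub_eq_zero.1 <| norm_le_zero_iff.1 <|
      le_of_tendsto_of_tendsto' hlim hzero fun n => (hspec n).2.2 s t
  have hone : g 1 = 1 := by
    have hunit := (Unitary.isUnit_and_norm_ringInverse_le (ρ 1).2
      ((hnear 1).trans_lt (by linarith))).1
    exact hunit.mul_left_cancel (by rw [← hmul, mul_one, mul_one])
  exact ⟨⟨⟨g, hone⟩, hmul⟩, g.continuous, hnear⟩

end Iteration

theorem Real.abs_sqrt_sub_one_le {x : ℝ} (hx : 0 ≤ x) : |√x - 1| ≤ |x - 1| := by
  have hsq : x - 1 = (√x - 1) * (√x + 1) := by ring_nf; rw [Real.sq_sqrt hx]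
  rw [hsq, abs_mul]
  exact le_mul_of_one_le_right (abs_nonneg _)
    (by rw [abs_of_pos (by positivity)]; linarith [Real.sqrt_nonneg x])

theorem norm_mul_star_sub_one_le {A : Type*} [NormedRing A] [StarRing A] [CStarRing A]
    [Nontrivial A] {u : A} (hu : u ∈ unitary A) (a : A) :
    ‖a * star a - 1‖ ≤ ‖a - u‖ * (2 + ‖a - u‖) := by
  have hdecomp : a * star a - 1 = a * star (a - u) + (a - u) * star u := by
    rw [star_sub, ← Unitary.mul_star_self_of_mem hu]
    noncomm_ring
  have ha : ‖a‖ ≤ ‖a - u‖ + 1 := by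
    simpa [CStarRing.norm_of_mem_unitary hu] using norm_le_norm_sub_add a u
  rw [hdecomp]
  calc _ ≤ ‖a‖ * ‖a - u‖ + ‖a - u‖ * 1 := by
        refine (norm_add_le _ _).trans (add_le_add ?_ ?_)
        · exact (norm_mul_le _ _).trans_eq (by rw [norm_star])
        · simpa [CStarRing.norm_of_mem_unitary (Unitary.star_mem hu)] using
            norm_mul_le (a - u) (star u)
    _ ≤ (‖a - u‖ + 1) * ‖a - u‖ + ‖a - u‖ * 1 := by gcongr
    _ = ‖a - u‖ * (2 + ‖a - u‖) := by ring

theorem IsSelfAdjoint.exists_sqrt_near_one {A : Type*} [CStarAlgebra A] [Nontrivial A] {P : A}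
    (hP : IsSelfAdjoint P) (h : ‖P - 1‖ ≤ 1) :
    ∃ S, IsSelfAdjoint S ∧ S * S = P ∧ ‖S - 1‖ ≤ ‖P - 1‖ := by
  have hspec x (hx : x ∈ spectrum ℝ P) : |x - 1| ≤ ‖P - 1‖ := by
    have := spectrum.norm_le_norm_of_mem (spectrum.sub_singleton_eq (R := ℝ) P 1 ▸
      Set.sub_mem_sub hx rfl : x - 1 ∈ spectrum ℝ (P - algebraMap ℝ A 1))
    simpa using this
  have hnonneg x (hx : x ∈ spectrum ℝ P) : 0 ≤ x := by
    linarith [(abs_le.1 ((hspec x hx).trans h)).1]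
  refine ⟨cfc Real.sqrt P, cfc_predicate _ P, ?_, ?_⟩
  · rw [← cfc_mul .., cfc_congr (g := fun x => x) fun x hx => Real.mul_self_sqrt (hnonneg x hx),
      cfc_id' ℝ P]
  · have : cfc Real.sqrt P - 1 = cfc (fun x => √x - 1) P := by rw [cfc_sub .., cfc_const_one ℝ P]
    rw [this]
    exact norm_cfc_le (norm_nonneg _) fun x hx =>
      (Real.abs_sqrt_sub_one_le (hnonneg x hx)).trans (hspec x hx)

theorem MonoidHom.exists_unitary_conj {G A : Type*} [Group G] [Monoid A] [StarMul A]
    (g : G →* A) (S : Aˣ) (hS : star (S : A) = S)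
    (hinv : ∀ s, g s * (S * S) * star (g s) = S * S) :
    ∃ ρ : G →* unitary A, ∀ s, (ρ s : A) = ↑S⁻¹ * g s * S := by
  have hSinv : star (↑S⁻¹ : A) = ↑S⁻¹ :=
    (Units.inv_eq_of_mul_eq_one_left (by rw [← hS, ← star_mul, Units.mul_inv, star_one])).symm
  have hmem s : ↑S⁻¹ * g s * S ∈ unitary A := by
    obtain ⟨w, hw⟩ : IsUnit (↑S⁻¹ * g s * S) :=
      (S⁻¹.isUnit.mul ((Group.isUnit s).map g)).mul S.isUnit
    have hright : ↑S⁻¹ * g s * S * star (↑S⁻¹ * g s * S) = 1 :=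
      calc _ = ↑S⁻¹ * (g s * (S * S) * star (g s)) * ↑S⁻¹ := by
            simp only [star_mul, hS, hSinv, mul_assoc]
        _ = 1 := by rw [hinv]; simp
    refine Unitary.mem_iff.2 ⟨?_, hright⟩
    rw [← hw] at hright ⊢
    rw [← Units.inv_eq_of_mul_eq_one_right hright, Units.inv_mul]
  refine ⟨{ toFun s := ⟨_, hmem s⟩, map_one' := ?_, map_mul' := fun s t => ?_ }, fun s => rfl⟩
  · ext; simp
  · ext; simp [mul_assoc]

theorem Units.norm_conj_sub_le {A : Type*} [NormedRing A] (S : Aˣ) (a : A) :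
    ‖↑S⁻¹ * a * S - a‖ ≤ 2 * ‖(↑S⁻¹ : A)‖ * ‖a‖ * ‖(S : A) - 1‖ := by
  have : ↑S⁻¹ * a * S - a = ↑S⁻¹ * (a * (S - 1) - (S - 1) * a) := by
    simp only [mul_sub, sub_mul, mul_one, one_mul, ← mul_assoc, Units.inv_mul]
    abel
  rw [this]
  calc _ ≤ ‖(↑S⁻¹ : A)‖ * (‖a‖ * ‖(S : A) - 1‖ + ‖(S : A) - 1‖ * ‖a‖) :=
        (norm_mul_le _ _).trans (mul_le_mul_of_nonneg_left ((norm_sub_le _ _).trans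
          (add_le_add (norm_mul_le _ _) (norm_mul_le _ _))) (norm_nonneg _))
    _ = _ := by ring

section Unitarization

variable {G : Type*} [Group G] [TopologicalSpace G] [IsTopologicalGroup G] [CompactSpace G]
  [MeasurableSpace G] [BorelSpace G] (μ : Measure G)

theorem MonoidHom.mul_integral_mul_star_mul_star {A : Type*} [NormedRing A] [StarRing A]
    [ContinuousStar A] [NormedAlgebra ℝ A] [IsFiniteMeasure μ] [μ.IsMulLeftInvariant]
    (g : G →* A) (hg : Continuous g) (s : G) :
    g s * (∫ t, g t * star (g t) ∂μ) * star (g s) = ∫ t, g t * star (g t) ∂μ := by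
  have hint : Integrable (fun t => g t * star (g t)) μ :=
    (hg.mul hg.star).integrable_of_compactSpace
  rw [← integral_const_mul_of_integrable hint,
    ← integral_mul_const_of_integrable (hint.const_mul _)]
  have hconj t : g s * (g t * star (g t)) * star (g s) = g (s * t) * star (g (s * t)) := by
    simp only [map_mul, star_mul, mul_assoc]
  simp_rw [hconj]
  exact integral_mul_left_eq_self (fun t => g t * star (g t)) s

variable [IsProbabilityMeasure μ] [μ.IsMulLeftInvariant] {A : Type*} [CStarAlgebra A]
  [Nontrivial A]

include μ in
theorem exists_unitary_monoidHom_near (g : G →* A) (hg : Continuous g) (ρ : G → unitary A)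
    {r : ℝ} (hr : r ≤ 1 / 5) (hgρ : ∀ s, ‖g s - ρ s‖ ≤ r) :
    ∃ ρ' : G →* unitary A, Continuous ρ' ∧ ∀ s, ‖(ρ' s : A) - ρ s‖ ≤ 19 * r := by
  have hr0 : 0 ≤ r := (norm_nonneg _).trans (hgρ 1)
  set P := ∫ t, g t * star (g t) ∂μ
  have hP : IsSelfAdjoint P := by
    change star P = P
    simp only [P, ← integral_star, star_mul, star_star]
  have hP1 : ‖P - 1‖ ≤ r * (2 + r) := by
    have hint : Integrable (fun t => g t * star (g t)) μ :=
      (hg.mul hg.star).integrable_of_compactSpace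
    have hsub : P - 1 = ∫ t, (g t * star (g t) - 1) ∂μ := by
      rw [integral_sub hint (integrable_const 1)]
      simp [P]
    rw [hsub]
    refine norm_integral_le_of_forall_norm_le fun t =>
      (norm_mul_star_sub_one_le (ρ t).2 _).trans ?_
    exact mul_le_mul (hgρ t) (by linarith [hgρ t]) (by positivity) hr0
  obtain ⟨S, hS, hSS, hS1⟩ := hP.exists_sqrt_near_one (hP1.trans (by nlinarith))
  have hS1' : ‖S - 1‖ ≤ 1 / 2 := hS1.trans (hP1.trans (by nlinarith))
  obtain ⟨hSu, hSinv⟩ :=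
    Unitary.isUnit_and_norm_ringInverse_le (one_mem (unitary A)) (hS1'.trans_lt one_half_lt_one)
  obtain ⟨ρ', hρ'⟩ := g.exists_unitary_conj hSu.unit hS fun s => by
    rw [hSu.unit_spec, hSS, g.mul_integral_mul_star_mul_star μ hg]
  refine ⟨ρ', continuous_induced_rng.2 ?_, fun s => ?_⟩
  · simp_rw [Function.comp_def, hρ']
    exact (continuous_const.mul hg).mul continuous_const
  have hSinv' : ‖(↑hSu.unit⁻¹ : A)‖ ≤ 2 := by
    rw [← Ring.inverse_unit, hSu.unit_spec]
    refine hSinv.trans ?_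
    rw [inv_le_comm₀ (by linarith) two_pos]
    linarith
  have hgs : ‖g s‖ ≤ 2 := by
    linarith [norm_le_norm_sub_add (g s) (ρ s), CStarRing.norm_coe_unitary (ρ s), hgρ s]
  calc ‖(ρ' s : A) - ρ s‖ ≤ ‖(ρ' s : A) - g s‖ + ‖g s - ρ s‖ := norm_sub_le_norm_sub_add_norm_sub ..
    _ ≤ 2 * 2 * 2 * (r * (2 + r)) + r := by
        refine add_le_add ?_ (hgρ s)
        rw [hρ']
        refine (hSu.unit.norm_conj_sub_le _).trans ?_
        rw [hSu.unit_spec]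
        gcongr
        exact hS1.trans hP1
    _ ≤ 19 * r := by nlinarith

end Unitarization

/-- Let `G` be a compact topological group and `A` a unital C*-algebra
with unitary group `unitary A`. For every `δ > 0` there is `ε > 0` such that every
continuous `ρ : G → unitary A` with `‖ρ s * ρ t - ρ (s*t)‖ ≤ ε` for all `s, t` is
uniformly within `δ` of a continuous group homomorphism `G → unitary A`. -/
theorem almost_unitary_rep_near_rep {G : Type*} [Group G] [TopologicalSpace G]
    [IsTopologicalGroup G] [CompactSpace G]
    {A : Type*} [NormedRing A] [StarRing A] [CStarRing A] [CompleteSpace A]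
    [NormedAlgebra ℂ A] [StarModule ℂ A]
    (δ : ℝ) (hδ : 0 < δ) :
    ∃ ε > 0, ∀ ρ : G → unitary A, Continuous ρ →
      (∀ s t : G, ‖(ρ s : A) * (ρ t : A) - (ρ (s * t) : A)‖ ≤ ε) →
      ∃ ρ' : G →* unitary A, Continuous ρ' ∧
        ∀ s : G, ‖(ρ' s : A) - (ρ s : A)‖ ≤ δ := by
  rcases subsingleton_or_nontrivial A with hA | hA
  · refine ⟨1, one_pos, fun ρ _ _ => ⟨1, continuous_const, fun s => ?_⟩⟩
    rw [Subsingleton.elim ((1 : G →* unitary A) s : A) (ρ s), sub_self, norm_zero]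
    exact hδ.le
  let _ : CStarAlgebra A := {}
  borelize G
  let μ := Measure.haarMeasure (⊤ : TopologicalSpace.PositiveCompacts G)
  have : IsProbabilityMeasure μ := ⟨by
    rw [← TopologicalSpace.PositiveCompacts.coe_top]; exact Measure.haarMeasure_self⟩
  have hδ1 := min_le_right δ 1
  -- The iteration moves `ρ` by at most `3ε`, the unitarization by at most `19 · 3ε < 60ε`.
  refine ⟨min δ 1 / 60, by positivity, fun ρ hρ hdef => ?_⟩
  obtain ⟨g, hg, hgρ⟩ := exists_continuous_monoidHom_near μ ρ (by linarith)
    (fun s t => (norm_sub_rev _ _).trans_le (hdef s t)) hρ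
  obtain ⟨ρ', hρ', hρ'ρ⟩ := exists_unitary_monoidHom_near μ g hg ρ (by linarith) hgρ
  exact ⟨ρ', hρ', fun s => (hρ'ρ s).trans (by linarith [min_le_left δ 1])⟩
end
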